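/- arXiv:math/0408318 — 2 statements merged into one kernel-verified Lean document; each statement's English description precedes it below -/
import Mathlib

section
/- The intersection number [Θ_U]⁵ on U_X(2,0) equals 5: namely (1/16)·C(5,2)·1·8 = 5, where the computation pulls back under a degree-16 étale cover to SU_X(2) × J ≅ ℙ³ × J, ψ*Θ_U = O(1) ⊠ O(2Θ₀), and uses (2Θ₀)² = 8 on J and H³ = 1 on ℙ³. -/
/-! In the binomial expansion of `(x + y) ^ (m + n)`, every term other than `x ^ m * y ^ n`
carries either `x ^ (m + 1)` or `y ^ (n + 1)`. For `h` on `ℙ³` and `t = 2Θ₀` on the surface `J`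
this leaves `(h + t) ^ 5 = C(5,2) • h ^ 3 * t ^ 2`, whose integral is `10 · 8 = 80 = 16 · [Θ_U]⁵`. -/

theorem add_pow_add_eq_choose_nsmul_of_pow_succ_eq_zero {R : Type*} [CommSemiring R] {x y : R}
    {m n : ℕ} (hx : x ^ (m + 1) = 0) (hy : y ^ (n + 1) = 0) :
    (x + y) ^ (m + n) = (m + n).choose m • (x ^ m * y ^ n) := by
  rw [add_pow, Finset.sum_eq_single m]
  · rw [Nat.add_sub_cancel_left, mul_comm, nsmul_eq_mul]
  · intro k _ hkm
    rcases lt_or_gt_of_ne hkm with hlt | hgt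
    · rw [pow_eq_zero_of_le (by omega) hy, mul_zero, zero_mul]
    · rw [pow_eq_zero_of_le hgt hx, zero_mul, zero_mul]
  · intro hm
    exact absurd (Finset.mem_range.mpr (by omega)) hm

/-- The intersection number `[Θ_U]⁵` on `U_X(2,0)` equals 5: namely
`(1/16)·C(5,2)·1·8 = 5`, computed by pulling back under the degree-16 étale cover
`ψ : SU_X(2) × J ≅ ℙ³ × J → U_X(2,0)`, with `ψ*Θ_U = O(1) ⊠ O(2Θ₀)`,
`(2Θ₀)² = 8` on `J` and `H³ = 1` on `ℙ³`.  We model the cohomology ring of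
`ℙ³ × J` as a commutative ring containing `h` (the hyperplane class, `h⁴ = 0`) and
`t = 2Θ₀` (pulled back from the surface `J`, so `t³ = 0`), with an integration map
recording `∫ h³·t² = 1·8 = 8`; the projection formula for the degree-16 cover gives
`∫ (h+t)⁵ = 16·[Θ_U]⁵`. -/
theorem stmt6 {R : Type*} [CommRing R] (h t : R)
    (hh4 : h ^ 4 = 0) (ht3 : t ^ 3 = 0)
    (integral : R →+ ℤ)
    (hht : integral (h ^ 3 * t ^ 2) = 1 * 8)
    (ΘU5 : ℤ)
    (hproj : integral ((h + t) ^ 5) = 16 * ΘU5) :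
    16 * ΘU5 = (Nat.choose 5 2 : ℤ) * 1 * 8 ∧ ΘU5 = 5 := by
  have hexpand : (h + t) ^ 5 = Nat.choose 5 2 • (h ^ 3 * t ^ 2) :=
    add_pow_add_eq_choose_nsmul_of_pow_succ_eq_zero (m := 3) (n := 2) hh4 ht3
  have hdeg : 16 * ΘU5 = (Nat.choose 5 2 : ℤ) * 1 * 8 := by
    rw [← hproj, hexpand, map_nsmul, hht, nsmul_eq_mul, mul_assoc]
  exact ⟨hdeg, by simp [Nat.choose] at hdeg; omega⟩
end

section
/- On a smooth projective surface S̃ with canonical class K = 2H where H² = 6, any divisor class D̃ = 6H − ∑_{i=1}^{45} aᵢEᵢ with aᵢ ≥ 2, Eᵢ disjoint (−2)-curves orthogonal to H, has arithmetic genus p_a(D̃) ≤ −35; in particular D̃ cannot be an effective reduced connected curve. -/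
/-!
Since the `Eᵢ` are mutually orthogonal `(-2)`-classes orthogonal to `H`, adjunction gives
`2 p_a - 2 = (8H - ∑ aᵢEᵢ)·(6H - ∑ aᵢEᵢ) = 288 - 2 ∑ aᵢ² ≤ 288 - 2·45·4 = -72`,
while an effective reduced connected curve has `p_a ≥ 0`.
-/

open Finset

namespace LinearMap

-- Integer coefficients act through `zsmul`, which is also how `(n : ℤ) • x` elaborates in the
-- theorem below, even in the presence of a separate `Module ℤ M` instance.
variable {ι R M : Type*} [Fintype ι] [CommRing R] [AddCommGroup M] [Module R M]
  (B : M →ₗ[R] M →ₗ[R] R)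

theorem apply_sum_zsmul_eq_zero {x : M} {v : ι → M} (h : ∀ i, B x (v i) = 0) (a : ι → ℤ) :
    B x (∑ i, a i • v i) = 0 := by
  simp [h]

theorem sum_zsmul_apply_eq_zero {x : M} {v : ι → M} (h : ∀ i, B (v i) x = 0) (a : ι → ℤ) :
    B (∑ i, a i • v i) x = 0 := by
  simp [h]

theorem IsOrthoᵢ.apply_sum_zsmul {v : ι → M} (hv : B.IsOrthoᵢ v) (a : ι → ℤ) (j : ι) :
    B (v j) (∑ i, a i • v i) = a j * B (v j) (v j) := by
  simp only [map_sum, map_zsmul, zsmul_eq_mul]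
  exact Fintype.sum_eq_single j fun i hij => by rw [hv (Ne.symm hij), mul_zero]

theorem IsOrthoᵢ.sum_zsmul_apply_sum_zsmul {v : ι → M} (hv : B.IsOrthoᵢ v) {c : R}
    (hc : ∀ i, B (v i) (v i) = c) (a : ι → ℤ) :
    B (∑ i, a i • v i) (∑ i, a i • v i) = c * ∑ i, (a i : R) ^ 2 := by
  rw [LinearMap.map_sum₂, mul_sum]
  refine sum_congr rfl fun j _ => ?_
  rw [map_zsmul, LinearMap.smul_apply, hv.apply_sum_zsmul, hc, zsmul_eq_mul]
  ring

theorem zsmul_sub_apply_zsmul_sub {x y : M} (hxy : B x y = 0) (hyx : B y x = 0) (m n : ℤ) :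
    B (m • x - y) (n • x - y) = m * n * B x x + B y y := by
  simp only [map_sub, map_zsmul, LinearMap.sub_apply, LinearMap.smul_apply, zsmul_eq_mul,
    hxy, hyx]
  ring

end LinearMap

/-- On a smooth projective surface `S̃` with canonical class `K = 2H`,
`H² = 6`, and 45 disjoint (−2)-curves `Eᵢ` orthogonal to `H`, any divisor class
`D̃ = 6H − ∑ aᵢEᵢ` with `aᵢ ≥ 2` has arithmetic genus (given by adjunction
`2p_a − 2 = (K + D̃)·D̃`) at most `−35`; in particular `D̃` cannot be an effective
reduced connected curve (whose arithmetic genus would be nonnegative).  We model the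
Néron–Severi lattice as a `ℤ`-module with the intersection pairing `B`. -/
theorem stmt16 {M : Type*} [AddCommGroup M] [Module ℤ M]
    (B : M →ₗ[ℤ] M →ₗ[ℤ] ℤ)
    (H : M) (E : Fin 45 → M)
    (hHH : B H H = 6)
    (hHE : ∀ i, B H (E i) = 0) (hEH : ∀ i, B (E i) H = 0)
    (hEE : ∀ i, B (E i) (E i) = -2)
    (hEij : ∀ i j, i ≠ j → B (E i) (E j) = 0)
    (a : Fin 45 → ℤ) (ha : ∀ i, 2 ≤ a i)
    (K D : M)
    (hK : K = (2 : ℤ) • H)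
    (hD : D = (6 : ℤ) • H - ∑ i, a i • E i)
    (pa : ℤ) (hadj : 2 * pa - 2 = B (K + D) D)
    (IsEffectiveReducedConnectedCurve : Prop)
    (hgenusNonneg : IsEffectiveReducedConnectedCurve → 0 ≤ pa) :
    pa ≤ -35 ∧ ¬ IsEffectiveReducedConnectedCurve := by
  set S := ∑ i, a i • E i
  have hKD : K + D = (8 : ℤ) • H - S := by rw [hK, hD, ← add_sub_assoc, ← add_zsmul]; norm_num
  have hSS : B S S = -2 * ∑ i, a i ^ 2 :=
    LinearMap.IsOrthoᵢ.sum_zsmul_apply_sum_zsmul B (fun i j hij => hEij i j hij) hEE a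
  have hDD : B (K + D) D = 288 - 2 * ∑ i, a i ^ 2 := by
    rw [hKD, hD, B.zsmul_sub_apply_zsmul_sub (B.apply_sum_zsmul_eq_zero hHE a)
      (B.sum_zsmul_apply_eq_zero hEH a), hHH, hSS]
    push_cast
    ring
  have hsum : 180 ≤ ∑ i, a i ^ 2 := by
    simpa using card_nsmul_le_sum univ (fun i => a i ^ 2) 4 fun i _ => by nlinarith [ha i]
  have hpa : pa ≤ -35 := by linarith
  exact ⟨hpa, fun h => by linarith [hgenusNonneg h]⟩
end
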